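/- Let d ≥ 3 and let V be a B∞ potential with constant C₀ which is not almost everywhere zero. Then for every x ∈ ℝ^d one has 0 < m(x,V) < ∞ and ψ(x, 1/m(x,V)) = 1. Moreover: (i) for all 0 < c₁ ≤ c₂ there exist constants 0 < c ≤ C, depending only on d, C₀, c₁, c₂, such that for every x ∈ ℝ^d and r > 0, if c₁ ≤ ψ(x,r) ≤ c₂ then c ≤ r·m(x,V) ≤ C; and (ii) for all 0 < C₁ ≤ C₂ there exist constants 0 < c₁′ ≤ c₂′, depending only on d, C₀, C₁, C₂, such that for every x ∈ ℝ^d and r > 0, if C₁ ≤ r·m(x,V) ≤ C₂ then c₁′ ≤ ψ(x,r) ≤ c₂′. -/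

import Mathlib

open MeasureTheory Metric Set

noncomputable section

/-- `ℝ^d` as Euclidean space. -/
abbrev Ed (d : ℕ) := EuclideanSpace ℝ (Fin d)

/-- The `B_∞` condition with constant `C₀`:
`ess sup_B V ≤ C₀ ⨍_B V` for every ball `B ⊆ ℝ^d`. -/
def BInfty (d : ℕ) (C₀ : ℝ) (V : Ed d → ℝ) : Prop :=
  ∀ (x : Ed d) (r : ℝ), 0 < r →
    ∀ᵐ y ∂(volume.restrict (ball x r)), V y ≤ C₀ * ⨍ z in ball x r, V z

/-- `ψ(x,r) = r^{2-d} ∫_{B(x,r)} V`. -/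
def psiFun (d : ℕ) (V : Ed d → ℝ) (x : Ed d) (r : ℝ) : ℝ :=
  r ^ ((2 : ℝ) - d) * ∫ y in ball x r, V y

/-- "Good potential": measurable, locally bounded, positive a.e., `B_∞` with constant `C₀`. -/
def GoodV (d : ℕ) (C₀ : ℝ) (V : Ed d → ℝ) : Prop :=
  Measurable V ∧ (∀ x : Ed d, ∃ r > 0, ∃ K : ℝ, ∀ y ∈ ball x r, |V y| ≤ K) ∧
    (∀ᵐ x : Ed d ∂volume, 0 < V x) ∧ BInfty d C₀ V

/-- The Fefferman–Phong–Shen maximal function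
`m(x,V) = inf { 1/r : r > 0, ψ(x,r) ≤ 1 }`. -/
def mFun (d : ℕ) (V : Ed d → ℝ) (x : Ed d) : ℝ :=
  sInf {s : ℝ | ∃ r : ℝ, 0 < r ∧ s = 1 / r ∧ psiFun d V x r ≤ 1}

open Filter Topology

/-!
The `B∞` condition bounds `V` on any subset of a ball by `C₀` times its average over the ball.
Applied to `B(x,a) ⊆ B(x,b)` this gives `ψ(x,a) ≤ C₀ (a/b)² ψ(x,b)`, so `ψ(x,·)` is small near `0`
and large near `∞`; being continuous, it takes the value `1` at `R = sup {r | ψ(x,r) ≤ 1}`, and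
`m(x,V) = 1/R`. Applied to the annulus `B(x,b) \ B(x,θb)` with `θ` close to `1` it gives
`∫_{B(x,b)} V ≤ 2 ∫_{B(x,θb)} V`, which iterates to a doubling bound with a constant depending
only on `d`, `C₀` and the ratio of the radii. Comparing `ψ(x,r)` with `ψ(x,R) = 1` through these
two estimates gives (i) and (ii).
-/

theorem MeasureTheory.LocallyIntegrable.integrableOn_ball {X : Type*} [PseudoMetricSpace X]
    [ProperSpace X] [MeasurableSpace X] {μ : Measure X} {f : X → ℝ} (hf : LocallyIntegrable f μ)
    (x : X) (r : ℝ) : IntegrableOn f (ball x r) μ :=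
  (hf.integrableOn_isCompact (isCompact_closedBall x r)).mono_set ball_subset_closedBall

theorem integral_ball_mono {X : Type*} [PseudoMetricSpace X] [ProperSpace X] [MeasurableSpace X]
    {μ : Measure X} {f : X → ℝ} (hf : LocallyIntegrable f μ) (hf₀ : 0 ≤ᵐ[μ] f) (x : X)
    {a b : ℝ} (hab : a ≤ b) : ∫ y in ball x a, f y ∂μ ≤ ∫ y in ball x b, f y ∂μ :=
  setIntegral_mono_set (hf.integrableOn_ball x b) (ae_restrict_of_ae hf₀)
    (ball_subset_ball hab).eventuallyLE

theorem continuousAt_integral_ball {E : Type*} [NormedAddCommGroup E] [NormedSpace ℝ E]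
    [FiniteDimensional ℝ E] [MeasurableSpace E] [BorelSpace E] {μ : Measure E}
    [μ.IsAddHaarMeasure] {f : E → ℝ} (hf : LocallyIntegrable f μ) (x : E)
    {r₀ : ℝ} (hr₀ : r₀ ≠ 0) : ContinuousAt (fun r => ∫ y in ball x r, f y ∂μ) r₀ := by
  simp_rw [← integral_indicator measurableSet_ball]
  refine continuousAt_of_dominated (bound := (ball x (r₀ + 1)).indicator fun y => ‖f y‖)
    (Eventually.of_forall fun r => hf.aestronglyMeasurable.indicator measurableSet_ball) ?_
    ((integrable_indicator_iff measurableSet_ball).2 (hf.integrableOn_ball x _).norm) ?_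
  · filter_upwards [eventually_lt_nhds (lt_add_one r₀)] with r hr
    refine Eventually.of_forall fun y => ?_
    rw [← norm_indicator_eq_indicator_norm]
    exact norm_indicator_le_of_subset (ball_subset_ball hr.le) f y
  · -- off the null sphere of radius `r₀`, `r ↦ 1_{B(x,r)}(y)` is locally constant near `r₀`
    filter_upwards [measure_eq_zero_iff_ae_notMem.1 (Measure.addHaar_sphere_of_ne_zero μ x hr₀)]
      with y hy
    rcases lt_or_gt_of_ne (mt mem_sphere.2 hy) with h | h
    · refine continuousAt_const.congr (f := fun _ => f y) ?_
      filter_upwards [eventually_gt_nhds h] with r hr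
      exact (indicator_of_mem (mem_ball.2 hr) f).symm
    · refine continuousAt_const.congr (f := fun _ => 0) ?_
      filter_upwards [eventually_lt_nhds h] with r hr
      exact (indicator_of_notMem (fun h' => (mem_ball.1 h').not_gt hr) f).symm

theorem exists_pos_lt_one_mul_one_sub_pow_le_half (C₀ : ℝ) (d : ℕ) :
    ∃ θ : ℝ, 0 < θ ∧ θ < 1 ∧ C₀ * (1 - θ ^ d) ≤ 1 / 2 := by
  have hlim : Tendsto (fun θ : ℝ => C₀ * (1 - θ ^ d)) (𝓝[<] 1) (𝓝 0) := by
    have hcont : Continuous fun θ : ℝ => C₀ * (1 - θ ^ d) := by fun_prop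
    simpa using (hcont.tendsto 1).mono_left nhdsWithin_le_nhds
  obtain ⟨θ, hθ, hθ₀, hθ₁⟩ := ((hlim.eventually (ge_mem_nhds one_half_pos)).and
    (Ioo_mem_nhdsLT zero_lt_one)).exists
  exact ⟨θ, hθ₀, hθ₁, hθ⟩

section Potential

variable {d : ℕ} {C₀ : ℝ} {V : Ed d → ℝ}

theorem GoodV.locallyIntegrable (hV : GoodV d C₀ V) : LocallyIntegrable V := by
  intro x
  obtain ⟨r, hr, K, hK⟩ := hV.2.1 x
  exact ⟨ball x r, ball_mem_nhds x hr, Measure.integrableOn_of_bounded measure_ball_lt_top.ne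
    hV.1.aestronglyMeasurable (ae_restrict_of_forall_mem measurableSet_ball hK)⟩

theorem volume_real_ball_div_volume_real_ball (x : Ed d) {a b : ℝ} (ha : 0 < a) (hb : 0 < b) :
    volume.real (ball x a) / volume.real (ball x b) = (a / b) ^ d := by
  have hB₁ : (volume (ball (0 : Ed d) 1)).toReal ≠ 0 :=
    (ENNReal.toReal_pos (measure_ball_pos _ _ one_pos).ne' measure_ball_lt_top.ne).ne'
  simp only [measureReal_def, Measure.addHaar_ball_of_pos _ x ha,
    Measure.addHaar_ball_of_pos _ x hb, ENNReal.toReal_mul,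
    ENNReal.toReal_ofReal (pow_nonneg ha.le _),
    ENNReal.toReal_ofReal (pow_nonneg hb.le _), finrank_euclideanSpace_fin]
  rw [div_pow]
  field_simp

theorem psiFun_eq_sq_div_pow_mul (x : Ed d) {r : ℝ} (hr : 0 < r) :
    psiFun d V x r = r ^ 2 / r ^ d * ∫ y in ball x r, V y := by
  rw [psiFun, Real.rpow_sub hr, Real.rpow_two, Real.rpow_natCast]

theorem mFun_eq_one_div_of_isGreatest {x : Ed d} {R : ℝ}
    (hR : IsGreatest {r | 0 < r ∧ psiFun d V x r ≤ 1} R) : mFun d V x = 1 / R := by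
  refine IsLeast.csInf_eq ⟨⟨R, hR.1.1, rfl, hR.1.2⟩, ?_⟩
  rintro s ⟨r, hr, rfl, hψr⟩
  exact one_div_le_one_div_of_le hr (hR.2 ⟨hr, hψr⟩)

theorem continuousAt_psiFun (hV : LocallyIntegrable V) (x : Ed d) {r : ℝ} (hr : 0 < r) :
    ContinuousAt (psiFun d V x) r :=
  (Real.continuousAt_rpow_const r _ (Or.inl hr.ne')).mul (continuousAt_integral_ball hV x hr.ne')

theorem psiFun_pos (hV : LocallyIntegrable V) (hV₀ : ∀ᵐ y, 0 < V y) (x : Ed d) {r : ℝ}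
    (hr : 0 < r) : 0 < psiFun d V x r := by
  refine mul_pos (Real.rpow_pos_of_pos hr _) ?_
  rw [setIntegral_pos_iff_support_of_nonneg_ae (ae_restrict_of_ae (hV₀.mono fun _ h => h.le))
    (hV.integrableOn_ball x r)]
  exact (measure_ball_pos _ x hr).trans_le
    (measure_mono_ae (hV₀.mono fun _ hy hyb => ⟨hy.ne', hyb⟩))

end Potential

namespace BInfty

variable {d : ℕ} {C₀ : ℝ} {V : Ed d → ℝ}

theorem setIntegral_le (hB : BInfty d C₀ V) (hV : LocallyIntegrable V) (x : Ed d) {b : ℝ}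
    (hb : 0 < b) {s : Set (Ed d)} (hs : s ⊆ ball x b) :
    ∫ y in s, V y ≤ C₀ * (volume.real s / volume.real (ball x b)) * ∫ y in ball x b, V y :=
  calc ∫ y in s, V y ≤ ∫ _ in s, C₀ * ⨍ z in ball x b, V z :=
        integral_mono_ae ((hV.integrableOn_ball x b).mono_set hs)
          (integrableOn_const ((measure_mono hs).trans_lt measure_ball_lt_top).ne)
          (ae_restrict_of_ae_restrict_of_subset hs (hB x b hb))
    _ = C₀ * (volume.real s / volume.real (ball x b)) * ∫ y in ball x b, V y := by
        rw [setIntegral_const, setAverage_eq, smul_eq_mul, smul_eq_mul, div_eq_mul_inv]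
        ring

theorem integral_ball_le (hB : BInfty d C₀ V) (hV : LocallyIntegrable V) (x : Ed d) {a b : ℝ}
    (ha : 0 < a) (hab : a ≤ b) :
    ∫ y in ball x a, V y ≤ C₀ * (a / b) ^ d * ∫ y in ball x b, V y := by
  have hb := ha.trans_le hab
  simpa only [volume_real_ball_div_volume_real_ball x ha hb]
    using hB.setIntegral_le hV x hb (ball_subset_ball hab)

theorem integral_ball_sub_integral_ball_le (hB : BInfty d C₀ V) (hV : LocallyIntegrable V)
    (x : Ed d) {a b : ℝ} (ha : 0 < a) (hab : a ≤ b) :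
    (∫ y in ball x b, V y) - ∫ y in ball x a, V y ≤
      C₀ * (1 - (a / b) ^ d) * ∫ y in ball x b, V y := by
  have hb := ha.trans_le hab
  have hvol : volume.real (ball x b \ ball x a) / volume.real (ball x b) = 1 - (a / b) ^ d := by
    rw [measureReal_sdiff (ball_subset_ball hab) measurableSet_ball, sub_div,
      volume_real_ball_div_volume_real_ball x hb hb, div_self hb.ne', one_pow,
      volume_real_ball_div_volume_real_ball x ha hb]
  have h := hB.setIntegral_le hV x hb (s := ball x b \ ball x a) sdiff_subset
  rwa [setIntegral_sdiff measurableSet_ball (hV.integrableOn_ball x b) (ball_subset_ball hab),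
    hvol] at h

theorem psiFun_le (hB : BInfty d C₀ V) (hV : LocallyIntegrable V) (x : Ed d) {a b : ℝ}
    (ha : 0 < a) (hab : a ≤ b) : psiFun d V x a ≤ C₀ * (a / b) ^ 2 * psiFun d V x b := by
  have hb := ha.trans_le hab
  calc psiFun d V x a ≤ a ^ 2 / a ^ d * (C₀ * (a / b) ^ d * ∫ y in ball x b, V y) := by
        rw [psiFun_eq_sq_div_pow_mul x ha]
        exact mul_le_mul_of_nonneg_left (hB.integral_ball_le hV x ha hab) (by positivity)
    _ = C₀ * (a / b) ^ 2 * psiFun d V x b := by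
        rw [psiFun_eq_sq_div_pow_mul x hb, div_pow, div_pow]
        field_simp

theorem sq_div_mul_psiFun_le (hB : BInfty d C₀ V) (hV : LocallyIntegrable V) (x : Ed d)
    {a b : ℝ} (ha : 0 < a) (hab : a ≤ b) :
    (b / a) ^ 2 * psiFun d V x a ≤ C₀ * psiFun d V x b := by
  have hb := ha.trans_le hab
  calc (b / a) ^ 2 * psiFun d V x a ≤ (b / a) ^ 2 * (C₀ * (a / b) ^ 2 * psiFun d V x b) :=
        mul_le_mul_of_nonneg_left (hB.psiFun_le hV x ha hab) (by positivity)
    _ = C₀ * psiFun d V x b := by field_simp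

theorem exists_psiFun_eq_one (hB : BInfty d C₀ V) (hC₀ : 0 < C₀) (hV : LocallyIntegrable V)
    (hV₀ : ∀ᵐ y, 0 < V y) (x : Ed d) :
    ∃ R, 0 < R ∧ psiFun d V x R = 1 ∧ mFun d V x = 1 / R := by
  set S := {r | 0 < r ∧ psiFun d V x r ≤ 1}
  have hψ₁ := psiFun_pos hV hV₀ x one_pos
  have hS : S.Nonempty := by
    have hlim : Tendsto (fun r : ℝ => C₀ * r ^ 2 * psiFun d V x 1) (𝓝[>] 0) (𝓝 0) := by
      have hcont : Continuous fun r : ℝ => C₀ * r ^ 2 * psiFun d V x 1 := by fun_prop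
      simpa using (hcont.tendsto 0).mono_left nhdsWithin_le_nhds
    obtain ⟨r, hr, hr₀, hr₁⟩ := ((hlim.eventually (ge_mem_nhds one_pos)).and
      (Ioo_mem_nhdsGT one_pos)).exists
    exact ⟨r, hr₀, (hB.psiFun_le hV x hr₀ hr₁.le).trans (by simpa using hr)⟩
  have hSbdd : BddAbove S := by
    refine ⟨max 1 (C₀ / psiFun d V x 1), fun r ⟨hr, hψr⟩ => ?_⟩
    rcases le_or_gt r 1 with h | h
    · exact le_max_of_le_left h
    · have key := hB.sq_div_mul_psiFun_le hV x one_pos h.le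
      rw [div_one] at key
      refine le_max_of_le_right ((le_div_iff₀ hψ₁).2 ?_)
      nlinarith
  set R := sSup S
  have hR : 0 < R := hS.some_mem.1.trans_le (le_csSup hSbdd hS.some_mem)
  have hcont := continuousAt_psiFun hV x hR
  have hψR_le : psiFun d V x R ≤ 1 := by
    have hmem := mem_closure_image hcont (csSup_mem_closure hS hSbdd)
    exact closure_minimal (image_subset_iff.2 fun r hr => hr.2) isClosed_Iic hmem
  have hψR_ge : 1 ≤ psiFun d V x R := by
    refine ge_of_tendsto (hcont.tendsto.mono_left nhdsWithin_le_nhds)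
      (eventually_nhdsWithin_of_forall fun r (hr : r ∈ Ioi R) => ?_)
    by_contra h
    exact (le_csSup hSbdd ⟨hR.trans hr, (not_le.1 h).le⟩).not_gt hr
  exact ⟨R, hR, le_antisymm hψR_le hψR_ge,
    mFun_eq_one_div_of_isGreatest ⟨⟨hR, hψR_le⟩, fun r hr => le_csSup hSbdd hr⟩⟩

theorem integral_ball_le_two_mul (hB : BInfty d C₀ V) (hV : LocallyIntegrable V)
    (hV₀ : 0 ≤ᵐ[volume] V) (x : Ed d) {θ b : ℝ} (hθ₀ : 0 < θ) (hθ₁ : θ ≤ 1)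
    (hθ : C₀ * (1 - θ ^ d) ≤ 1 / 2) (hb : 0 < b) :
    ∫ y in ball x b, V y ≤ 2 * ∫ y in ball x (θ * b), V y := by
  have h := hB.integral_ball_sub_integral_ball_le hV x (mul_pos hθ₀ hb)
    (mul_le_of_le_one_left hb.le hθ₁)
  rw [mul_div_cancel_right₀ θ hb.ne'] at h
  have hI : 0 ≤ ∫ y in ball x b, V y := integral_nonneg_of_ae (ae_restrict_of_ae hV₀)
  linarith [mul_le_mul_of_nonneg_right hθ hI]

theorem integral_ball_le_two_pow_mul (hB : BInfty d C₀ V) (hV : LocallyIntegrable V)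
    (hV₀ : 0 ≤ᵐ[volume] V) (x : Ed d) {θ b : ℝ} (hθ₀ : 0 < θ) (hθ₁ : θ ≤ 1)
    (hθ : C₀ * (1 - θ ^ d) ≤ 1 / 2) (hb : 0 < b) (k : ℕ) :
    ∫ y in ball x b, V y ≤ 2 ^ k * ∫ y in ball x (θ ^ k * b), V y := by
  induction k with
  | zero => simp
  | succ k ih =>
    calc ∫ y in ball x b, V y ≤ 2 ^ k * ∫ y in ball x (θ ^ k * b), V y := ih
      _ ≤ 2 ^ k * (2 * ∫ y in ball x (θ * (θ ^ k * b)), V y) :=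
          mul_le_mul_of_nonneg_left
            (hB.integral_ball_le_two_mul hV hV₀ x hθ₀ hθ₁ hθ (by positivity)) (by positivity)
      _ = 2 ^ (k + 1) * ∫ y in ball x (θ ^ (k + 1) * b), V y := by
          rw [← mul_assoc θ, ← pow_succ']
          ring

theorem min_le_div_of_le_psiFun {x : Ed d} {R r : ℝ} (hB : BInfty d C₀ V) (hC₀ : 0 < C₀)
    (hV : LocallyIntegrable V) (hR : 0 < R) (hψR : psiFun d V x R = 1) (hr : 0 < r) {c : ℝ}
    (hc : c ≤ psiFun d V x r) :
    min 1 (c / C₀) ≤ r / R := by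
  rcases le_total r R with h | h
  · have key := hB.psiFun_le hV x hr h
    rw [hψR, mul_one] at key
    refine min_le_of_right_le ((div_le_iff₀ hC₀).2 ?_)
    calc c ≤ C₀ * (r / R) ^ 2 := hc.trans key
      _ ≤ C₀ * (r / R) := mul_le_mul_of_nonneg_left
          (pow_le_of_le_one (by positivity) ((div_le_one hR).2 h) two_ne_zero) hC₀.le
      _ = r / R * C₀ := mul_comm _ _
  · exact min_le_of_left_le ((one_le_div hR).2 h)

theorem div_le_max_of_psiFun_le {x : Ed d} {R r : ℝ} (hB : BInfty d C₀ V) (hC₀ : 0 < C₀)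
    (hV : LocallyIntegrable V) (hR : 0 < R) (hψR : psiFun d V x R = 1) {c : ℝ}
    (hc : psiFun d V x r ≤ c) :
    r / R ≤ max 1 (C₀ * c) := by
  rcases le_total r R with h | h
  · exact le_max_of_le_left ((div_le_one hR).2 h)
  · have key := hB.sq_div_mul_psiFun_le hV x hR h
    rw [hψR, mul_one] at key
    refine le_max_of_le_right ?_
    calc r / R ≤ (r / R) ^ 2 := le_self_pow₀ ((one_le_div hR).2 h) two_ne_zero
      _ ≤ C₀ * psiFun d V x r := key
      _ ≤ C₀ * c := mul_le_mul_of_nonneg_left hc hC₀.le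

theorem min_inv_le_psiFun {x : Ed d} {R r : ℝ} (hd : 2 ≤ d) (hB : BInfty d C₀ V) (hC₀ : 0 < C₀)
    (hV : LocallyIntegrable V) (hV₀ : 0 ≤ᵐ[volume] V) (hR : 0 < R) (hψR : psiFun d V x R = 1)
    (hr : 0 < r) {D : ℝ} (hD₀ : 0 < D)
    (hD : ∫ y in ball x R, V y ≤ D * ∫ y in ball x r, V y) :
    min D⁻¹ C₀⁻¹ ≤ psiFun d V x r := by
  rcases le_total r R with h | h
  · refine min_le_of_left_le ((inv_le_iff_one_le_mul₀ hD₀).2 ?_)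
    have hIr : 0 ≤ ∫ y in ball x r, V y := integral_nonneg_of_ae (ae_restrict_of_ae hV₀)
    calc 1 = R ^ ((2 : ℝ) - d) * ∫ y in ball x R, V y := hψR.symm
      _ ≤ R ^ ((2 : ℝ) - d) * (D * ∫ y in ball x r, V y) :=
          mul_le_mul_of_nonneg_left hD (by positivity)
      _ ≤ r ^ ((2 : ℝ) - d) * (D * ∫ y in ball x r, V y) :=
          mul_le_mul_of_nonneg_right
            (Real.rpow_le_rpow_of_nonpos hr h (sub_nonpos.2 (by exact_mod_cast hd)))
            (by positivity)
      _ = psiFun d V x r * D := by rw [psiFun]; ring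
  · have key := hB.sq_div_mul_psiFun_le hV x hR h
    rw [hψR, mul_one] at key
    refine min_le_of_right_le ((inv_le_iff_one_le_mul₀ hC₀).2 ?_)
    linarith [one_le_pow₀ (n := 2) ((one_le_div hR).2 h)]

theorem psiFun_le_max {x : Ed d} {R r : ℝ} (hd : 2 ≤ d) (hB : BInfty d C₀ V) (hC₀ : 0 < C₀)
    (hV : LocallyIntegrable V) (hV₀ : 0 ≤ᵐ[volume] V) (hR : 0 < R) (hψR : psiFun d V x R = 1)
    (hr : 0 < r) {D : ℝ} (hD₀ : 0 < D)
    (hD : ∫ y in ball x r, V y ≤ D * ∫ y in ball x R, V y) :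
    psiFun d V x r ≤ max D C₀ := by
  rcases le_total r R with h | h
  · have key := hB.psiFun_le hV x hr h
    rw [hψR, mul_one] at key
    exact le_max_of_le_right (key.trans (mul_le_of_le_one_right hC₀.le
      (pow_le_one₀ (by positivity) ((div_le_one hR).2 h))))
  · refine le_max_of_le_left ?_
    have hIR : 0 ≤ ∫ y in ball x R, V y := integral_nonneg_of_ae (ae_restrict_of_ae hV₀)
    calc psiFun d V x r = r ^ ((2 : ℝ) - d) * ∫ y in ball x r, V y := rfl
      _ ≤ r ^ ((2 : ℝ) - d) * (D * ∫ y in ball x R, V y) :=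
          mul_le_mul_of_nonneg_left hD (by positivity)
      _ ≤ R ^ ((2 : ℝ) - d) * (D * ∫ y in ball x R, V y) :=
          mul_le_mul_of_nonneg_right
            (Real.rpow_le_rpow_of_nonpos hR h (sub_nonpos.2 (by exact_mod_cast hd)))
            (by positivity)
      _ = D * psiFun d V x R := by rw [psiFun]; ring
      _ = D := by rw [hψR, mul_one]

end BInfty

theorem exists_integral_ball_le_mul_integral_ball (d : ℕ) (C₀ : ℝ) {κ : ℝ} (hκ : 0 < κ) :
    ∃ D : ℝ, 1 ≤ D ∧ ∀ V : Ed d → ℝ, BInfty d C₀ V → LocallyIntegrable V → 0 ≤ᵐ[volume] V →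
      ∀ (x : Ed d) {a b : ℝ}, 0 < b → κ * b ≤ a →
        ∫ y in ball x b, V y ≤ D * ∫ y in ball x a, V y := by
  obtain ⟨θ, hθ₀, hθ₁, hθ⟩ := exists_pos_lt_one_mul_one_sub_pow_le_half C₀ d
  obtain ⟨k, hk⟩ := exists_pow_lt_of_lt_one hκ hθ₁
  refine ⟨2 ^ k, one_le_pow₀ one_le_two, fun V hB hV hV₀ x a b hb hab => ?_⟩
  calc ∫ y in ball x b, V y ≤ 2 ^ k * ∫ y in ball x (θ ^ k * b), V y :=
        hB.integral_ball_le_two_pow_mul hV hV₀ x hθ₀ hθ₁.le hθ hb k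
    _ ≤ 2 ^ k * ∫ y in ball x a, V y :=
        mul_le_mul_of_nonneg_left (integral_ball_mono hV hV₀ x
          ((mul_le_mul_of_nonneg_right hk.le hb.le).trans hab)) (by positivity)

/-- `0 < m(x,V) < ∞` with `ψ(x, 1/m(x,V)) = 1`; moreover
`ψ(x,r) ∼ 1` iff `r·m(x,V) ∼ 1`, with comparison constants depending only on `d, C₀`
and the given comparison bounds. -/
theorem stmt2 (d : ℕ) (hd : 3 ≤ d) (C₀ : ℝ) (hC₀ : 0 < C₀) :
    (∀ V : Ed d → ℝ, GoodV d C₀ V → ¬ (V =ᵐ[volume] 0) → ∀ x : Ed d,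
      ((∃ r > 0, psiFun d V x r ≤ 1) ∧ 0 < mFun d V x) ∧
        psiFun d V x (1 / mFun d V x) = 1) ∧
    (∀ c₁ c₂ : ℝ, 0 < c₁ → c₁ ≤ c₂ → ∃ c C : ℝ, 0 < c ∧ c ≤ C ∧
      ∀ V : Ed d → ℝ, GoodV d C₀ V → ¬ (V =ᵐ[volume] 0) →
        ∀ (x : Ed d) (r : ℝ), 0 < r →
          c₁ ≤ psiFun d V x r → psiFun d V x r ≤ c₂ →
            c ≤ r * mFun d V x ∧ r * mFun d V x ≤ C) ∧
    (∀ C₁ C₂ : ℝ, 0 < C₁ → C₁ ≤ C₂ → ∃ c₁' c₂' : ℝ, 0 < c₁' ∧ c₁' ≤ c₂' ∧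
      ∀ V : Ed d → ℝ, GoodV d C₀ V → ¬ (V =ᵐ[volume] 0) →
        ∀ (x : Ed d) (r : ℝ), 0 < r →
          C₁ ≤ r * mFun d V x → r * mFun d V x ≤ C₂ →
            c₁' ≤ psiFun d V x r ∧ psiFun d V x r ≤ c₂') := by
  have hd₂ : 2 ≤ d := by omega
  have critical (V : Ed d → ℝ) (hV : GoodV d C₀ V) (x : Ed d) :
      ∃ R, 0 < R ∧ psiFun d V x R = 1 ∧ mFun d V x = 1 / R :=
    hV.2.2.2.exists_psiFun_eq_one hC₀ hV.locallyIntegrable hV.2.2.1 x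
  refine ⟨fun V hV _ x => ?_, fun c₁ c₂ hc₁ hc₁₂ => ?_, fun C₁ C₂ hC₁ hC₁₂ => ?_⟩
  · obtain ⟨R, hR, hψR, hm⟩ := critical V hV x
    rw [hm, one_div_one_div]
    exact ⟨⟨⟨R, hR, hψR.le⟩, by positivity⟩, hψR⟩
  · refine ⟨min 1 (c₁ / C₀), max 1 (C₀ * c₂), by positivity,
      (min_le_left _ _).trans (le_max_left _ _), fun V hV _ x r hr h₁ h₂ => ?_⟩
    obtain ⟨R, hR, hψR, hm⟩ := critical V hV x
    have hB : BInfty d C₀ V := hV.2.2.2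
    rw [hm, mul_one_div]
    exact ⟨hB.min_le_div_of_le_psiFun hC₀ hV.locallyIntegrable hR hψR hr h₁,
      hB.div_le_max_of_psiFun_le hC₀ hV.locallyIntegrable hR hψR h₂⟩
  · have hC₂ : 0 < C₂ := hC₁.trans_le hC₁₂
    obtain ⟨D₁, hD₁, hdoubling₁⟩ := exists_integral_ball_le_mul_integral_ball d C₀ hC₁
    obtain ⟨D₂, hD₂, hdoubling₂⟩ := exists_integral_ball_le_mul_integral_ball d C₀ (inv_pos.2 hC₂)
    refine ⟨min D₁⁻¹ C₀⁻¹, max D₂ C₀, by positivity,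
      ((min_le_left _ _).trans (inv_le_one_of_one_le₀ hD₁)).trans (hD₂.trans (le_max_left _ _)),
      fun V hV _ x r hr h₁ h₂ => ?_⟩
    obtain ⟨R, hR, hψR, hm⟩ := critical V hV x
    have hB : BInfty d C₀ V := hV.2.2.2
    have hV₀ : 0 ≤ᵐ[volume] V := hV.2.2.1.mono fun _ h => h.le
    rw [hm, mul_one_div, le_div_iff₀ hR] at h₁
    rw [hm, mul_one_div, div_le_iff₀ hR, ← inv_mul_le_iff₀ hC₂] at h₂
    exact ⟨hB.min_inv_le_psiFun hd₂ hC₀ hV.locallyIntegrable hV₀ hR hψR hr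
        (zero_lt_one.trans_le hD₁) (hdoubling₁ V hB hV.locallyIntegrable hV₀ x hR h₁),
      hB.psiFun_le_max hd₂ hC₀ hV.locallyIntegrable hV₀ hR hψR hr
        (zero_lt_one.trans_le hD₂) (hdoubling₂ V hB hV.locallyIntegrable hV₀ x hr h₂)⟩
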